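/- arXiv:solv-int/9902011 — 7 statements merged into one kernel-verified Lean document; each statement's English description precedes it below -/
import Mathlib

section
/- Let n ≥ 1. Suppose for each m ∈ {n-1, n, n+1} we are given a polynomial φ_m ∈ ℂ[z] of degree m with real coefficients, leading coefficient κ_m ≠ 0, and constant term φ_m(0) ≠ 0, and suppose the Szegő recursions hold: κ_{n-1}·z·φ_{n-1}(z) = κ_n·φ_n(z) − φ_n(0)·φ_n*(z) and κ_n·φ_{n+1}(z) = κ_{n+1}·z·φ_n(z) + φ_{n+1}(0)·φ_n*(z), where φ_n*(z) := z^n·φ_n(1/z) is the reversed polynomial of φ_n. Then the monic polynomials p_m := φ_m/κ_m satisfy z·(p_n(z) + C_n·p_{n-1}(z)) = p_{n+1}(z) + B_n·p_n(z), where B_n := −p_{n+1}(0)/p_n(0) and C_n := B_n·κ_{n-1}²/κ_n². -/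
open Polynomial

/-- **Szegő recursion for the monic polynomials.**
Let `n ≥ 1` and let `φ_{n-1}, φ_n, φ_{n+1}` be polynomials in `ℂ[z]` of degrees
`n-1, n, n+1` with real coefficients, nonzero leading coefficients
`κ_{n-1}, κ_n, κ_{n+1}` and nonzero constant terms, satisfying the Szegő recursions
`κ_{n-1}·z·φ_{n-1} = κ_n·φ_n − φ_n(0)·φ_n*` and
`κ_n·φ_{n+1} = κ_{n+1}·z·φ_n + φ_{n+1}(0)·φ_n*`,
where `φ_n* = reflect n φ_n` is the reversed polynomial.
Then the monic polynomials `p_m = φ_m/κ_m` satisfy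
`z·(p_n + C_n·p_{n-1}) = p_{n+1} + B_n·p_n` with
`B_n = −p_{n+1}(0)/p_n(0)` and `C_n = B_n·κ_{n-1}²/κ_n²`. -/
theorem stmt_0 (n : ℕ) (hn : 1 ≤ n)
    (φm1 φn φn1 : Polynomial ℂ)
    (hrealm1 : ∀ k, (φm1.coeff k).im = 0)
    (hrealn : ∀ k, (φn.coeff k).im = 0)
    (hrealn1 : ∀ k, (φn1.coeff k).im = 0)
    (hdegm1 : φm1.natDegree = n - 1)
    (hdegn : φn.natDegree = n)
    (hdegn1 : φn1.natDegree = n + 1)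
    (κm1 κn κn1 : ℂ)
    (hκm1 : κm1 = φm1.leadingCoeff) (hκm1ne : κm1 ≠ 0)
    (hκn : κn = φn.leadingCoeff) (hκnne : κn ≠ 0)
    (hκn1 : κn1 = φn1.leadingCoeff) (hκn1ne : κn1 ≠ 0)
    (hc0m1 : φm1.coeff 0 ≠ 0) (hc0n : φn.coeff 0 ≠ 0) (hc0n1 : φn1.coeff 0 ≠ 0)
    (hrec1 : Polynomial.C κm1 * Polynomial.X * φm1 =
      Polynomial.C κn * φn - Polynomial.C (φn.coeff 0) * (φn.reflect n))
    (hrec2 : Polynomial.C κn * φn1 =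
      Polynomial.C κn1 * Polynomial.X * φn + Polynomial.C (φn1.coeff 0) * (φn.reflect n)) :
    let Bn : ℂ := -((κn1⁻¹ * φn1.coeff 0) / (κn⁻¹ * φn.coeff 0))
    let Cn : ℂ := Bn * κm1 ^ 2 / κn ^ 2
    Polynomial.X * (Polynomial.C κn⁻¹ * φn + Polynomial.C Cn * (Polynomial.C κm1⁻¹ * φm1)) =
      Polynomial.C κn1⁻¹ * φn1 + Polynomial.C Bn * (Polynomial.C κn⁻¹ * φn) := by
  intro Bn Cn
  set R := φn.reflect n with hR
  have h1' : κm1 • (Polynomial.X * φm1) = κn • φn - (φn.coeff 0) • R := by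
    simp only [smul_eq_C_mul]
    linear_combination hrec1
  have h2' : κn • φn1 = κn1 • (Polynomial.X * φn) + (φn1.coeff 0) • R := by
    simp only [smul_eq_C_mul]
    linear_combination hrec2
  have h1 : Polynomial.X * φm1 = κm1⁻¹ • (κn • φn - (φn.coeff 0) • R) := by
    rw [← h1', inv_smul_smul₀ hκm1ne]
  have h2 : φn1 = κn⁻¹ • (κn1 • (Polynomial.X * φn) + (φn1.coeff 0) • R) := by
    rw [← h2', inv_smul_smul₀ hκnne]
  simp only [← smul_eq_C_mul, mul_add, mul_smul_comm]
  rw [h1, h2]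
  unfold Cn Bn
  match_scalars
  all_goals clear hrec1 hrec2 h1 h2 h1' h2' hR R Cn Bn
  all_goals ring_nf
  all_goals field_simp [hκm1ne, hκnne, hκn1ne, hc0n]
  all_goals ring
end

section
/- With the fixed-s orthogonal family setup, for every n ≥ 2 one has ∮_{|z|=1} z² · p_n(z) · p_n(1/z) dμ = −( C_{n+1}(B_n − C_n) − (B_n − C_n)² + C_n (B_{n−1} − C_{n−1}) ) · h_n. -/
open Polynomial

noncomputable def LLstmt4 (s : ℝ) (f g : Polynomial ℂ) : ℂ :=
  ∮ z in C(0, 1), f.eval z * g.eval z⁻¹ * Complex.exp (s * (z + z⁻¹)) / z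

theorem circleIntegral.integral_add' {E : Type*} [NormedAddCommGroup E] [NormedSpace ℂ E]
    {f g : ℂ → E} {c : ℂ} {R : ℝ} (hf : CircleIntegrable f c R)
    (hg : CircleIntegrable g c R) :
    (∮ z in C(c, R), f z + g z) = (∮ z in C(c, R), f z) + ∮ z in C(c, R), g z := by
  simp only [circleIntegral, smul_add, intervalIntegral.integral_add hf.out hg.out]

theorem LLstmt4_integrable (s : ℝ) (f g : Polynomial ℂ) :
    CircleIntegrable
      (fun z : ℂ => f.eval z * g.eval z⁻¹ * Complex.exp (s * (z + z⁻¹)) / z) 0 1 := by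
  apply ContinuousOn.circleIntegrable (by norm_num : (0:ℝ) ≤ 1)
  have hz : ∀ z ∈ Metric.sphere (0:ℂ) 1, z ≠ 0 := by
    intro z hz h0
    rw [Metric.mem_sphere, dist_zero_right, h0] at hz
    simp at hz
  have hinv : ContinuousOn (fun z : ℂ => z⁻¹) (Metric.sphere 0 1) :=
    ContinuousOn.inv₀ continuousOn_id hz
  refine ContinuousOn.div ?_ continuousOn_id hz
  refine ContinuousOn.mul (ContinuousOn.mul f.continuous.continuousOn ?_) ?_
  · exact g.continuous.comp_continuousOn hinv
  · exact Complex.continuous_exp.comp_continuousOn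
      (continuousOn_const.mul (continuousOn_id.add hinv))

theorem LLstmt4_add (s : ℝ) (f g q : Polynomial ℂ) :
    LLstmt4 s (f + g) q = LLstmt4 s f q + LLstmt4 s g q := by
  unfold LLstmt4
  have hfun : (fun z : ℂ => (f + g).eval z * q.eval z⁻¹ * Complex.exp (s * (z + z⁻¹)) / z)
      = fun z : ℂ => f.eval z * q.eval z⁻¹ * Complex.exp (s * (z + z⁻¹)) / z
        + g.eval z * q.eval z⁻¹ * Complex.exp (s * (z + z⁻¹)) / z := by
    funext z; simp only [Polynomial.eval_add]; ring
  rw [hfun]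
  exact circleIntegral.integral_add' (LLstmt4_integrable s f q) (LLstmt4_integrable s g q)

theorem LLstmt4_sub (s : ℝ) (f g q : Polynomial ℂ) :
    LLstmt4 s (f - g) q = LLstmt4 s f q - LLstmt4 s g q := by
  unfold LLstmt4
  have hfun : (fun z : ℂ => (f - g).eval z * q.eval z⁻¹ * Complex.exp (s * (z + z⁻¹)) / z)
      = fun z : ℂ => f.eval z * q.eval z⁻¹ * Complex.exp (s * (z + z⁻¹)) / z
        - g.eval z * q.eval z⁻¹ * Complex.exp (s * (z + z⁻¹)) / z := by
    funext z; simp only [Polynomial.eval_sub]; ring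
  rw [hfun]
  exact circleIntegral.integral_sub (LLstmt4_integrable s f q) (LLstmt4_integrable s g q)

theorem LLstmt4_smul (s : ℝ) (c : ℂ) (f q : Polynomial ℂ) :
    LLstmt4 s (Polynomial.C c * f) q = c * LLstmt4 s f q := by
  unfold LLstmt4
  have hfun : (fun z : ℂ => (Polynomial.C c * f).eval z * q.eval z⁻¹ *
        Complex.exp (s * (z + z⁻¹)) / z)
      = fun z : ℂ => c • (f.eval z * q.eval z⁻¹ * Complex.exp (s * (z + z⁻¹)) / z) := by
    funext z; simp only [Polynomial.eval_mul, Polynomial.eval_C, smul_eq_mul]; ring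
  rw [hfun, circleIntegral.integral_smul, smul_eq_mul]

/-- Lemma 3: `∮ z²·p_n(z)·p_n(1/z) dμ = −(C_{n+1}(B_n−C_n) − (B_n−C_n)² + C_n(B_{n−1}−C_{n−1}))·h_n` for `n ≥ 2`. -/
theorem stmt_4 (s : ℝ) (hs : 0 < s)
    (p : ℕ → Polynomial ℂ)
    (hmonic : ∀ n, (p n).Monic)
    (hdeg : ∀ n, (p n).natDegree = n)
    (hreal : ∀ n k, ((p n).coeff k).im = 0)
    (hp0 : ∀ n, (p n).coeff 0 ≠ 0)
    (horth : ∀ n m, n ≠ m →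
      (∮ z in C(0, 1), (p n).eval z * (p m).eval z⁻¹ *
        Complex.exp (s * (z + z⁻¹)) / z) = 0)
    (h : ℕ → ℂ)
    (hh : ∀ n, h n = ∮ z in C(0, 1), (p n).eval z * (p n).eval z⁻¹ *
        Complex.exp (s * (z + z⁻¹)) / z)
    (hne : ∀ n, h n ≠ 0)
    (Bn Cn : ℕ → ℂ)
    (hB : ∀ n, Bn n = -((p (n + 1)).coeff 0 / (p n).coeff 0))
    (hC : ∀ n, 1 ≤ n → Cn n = Bn n * h n / h (n - 1))
    (hrec : ∀ n, 1 ≤ n →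
      Polynomial.X * (p n + Polynomial.C (Cn n) * p (n - 1)) =
        p (n + 1) + Polynomial.C (Bn n) * p n)
    (n : ℕ) (hn : 2 ≤ n) :
    (∮ z in C(0, 1), z ^ 2 * (p n).eval z * (p n).eval z⁻¹ *
        Complex.exp (s * (z + z⁻¹)) / z) =
      -(Cn (n + 1) * (Bn n - Cn n) - (Bn n - Cn n) ^ 2 +
        Cn n * (Bn (n - 1) - Cn (n - 1))) * h n := by
  obtain ⟨m, rfl⟩ : ∃ m, n = m + 2 := ⟨n - 2, by omega⟩
  -- basic facts
  have horth' : ∀ a b, a ≠ b → LLstmt4 s (p a) (p b) = 0 := fun a b hab => horth a b hab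
  have hself : ∀ a, LLstmt4 s (p a) (p a) = h a := fun a => (hh a).symm
  have hp0eq : p 0 = 1 := (hmonic 0).natDegree_eq_zero.mp (hdeg 0)
  have hp1eq : p 1 = X + C ((p 1).coeff 0) := (hmonic 1).eq_X_add_C (hdeg 1)
  have hb0 : Bn 0 = -((p 1).coeff 0) := by rw [hB 0, hp0eq]; simp
  have hX0 : X * p 0 = p 1 + C (Bn 0) * p 0 := by
    rw [hp0eq, hb0, map_neg]
    linear_combination -hp1eq
  have hX20 : X ^ 2 * p 0 = X * p 1 - C ((p 1).coeff 0) * (X * p 0) := by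
    rw [hp0eq]
    linear_combination (-(X : Polynomial ℂ)) * hp1eq
  have hrecS : ∀ k, X * p (k + 1) =
      p (k + 2) + C (Bn (k + 1)) * p (k + 1) - C (Cn (k + 1)) * (X * p k) := by
    intro k
    have h1 := hrec (k + 1) (by omega)
    simp only [Nat.add_sub_cancel, show k + 1 + 1 = k + 2 from rfl] at h1
    linear_combination h1
  have hrecS2 : ∀ k, X ^ 2 * p (k + 1) =
      X * p (k + 2) + C (Bn (k + 1)) * (X * p (k + 1)) - C (Cn (k + 1)) * (X ^ 2 * p k) := by
    intro k
    linear_combination (X : Polynomial ℂ) * hrecS k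
  -- ⟨X p_k, p_m⟩ = 0 for k + 2 ≤ m
  have hLX : ∀ k mm, k + 2 ≤ mm → LLstmt4 s (X * p k) (p mm) = 0 := by
    intro k
    induction k with
    | zero =>
      intro mm hm
      rw [hX0, LLstmt4_add, LLstmt4_smul, horth' 1 mm (by omega), horth' 0 mm (by omega)]
      ring
    | succ k ih =>
      intro mm hm
      rw [hrecS k, LLstmt4_sub, LLstmt4_add, LLstmt4_smul, LLstmt4_smul,
        horth' (k + 2) mm (by omega), horth' (k + 1) mm (by omega), ih mm (by omega)]
      ring
  -- ⟨X p_k, p_{k+1}⟩ = h_{k+1}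
  have hLone : ∀ k, LLstmt4 s (X * p k) (p (k + 1)) = h (k + 1) := by
    intro k
    cases k with
    | zero =>
      rw [hX0, LLstmt4_add, LLstmt4_smul, hself 1, horth' 0 1 (by omega)]
      ring
    | succ k =>
      simp only [show k + 1 + 1 = k + 2 from rfl]
      rw [hrecS k, LLstmt4_sub, LLstmt4_add, LLstmt4_smul, LLstmt4_smul,
        hself (k + 2), horth' (k + 1) (k + 2) (by omega), hLX k (k + 2) (by omega)]
      ring
  -- ⟨X p_{k+1}, p_{k+1}⟩ = (B_{k+1} − C_{k+1}) h_{k+1}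
  have hLself : ∀ k, LLstmt4 s (X * p (k + 1)) (p (k + 1)) =
      (Bn (k + 1) - Cn (k + 1)) * h (k + 1) := by
    intro k
    rw [hrecS k, LLstmt4_sub, LLstmt4_add, LLstmt4_smul, LLstmt4_smul,
      horth' (k + 2) (k + 1) (by omega), hself (k + 1), hLone k]
    ring
  -- ⟨X p_{k+2}, p_{k+1}⟩ = −C_{k+2}(B_{k+1}−C_{k+1}) h_{k+1}
  have hLabove : ∀ k, LLstmt4 s (X * p (k + 2)) (p (k + 1)) =
      -(Cn (k + 2) * ((Bn (k + 1) - Cn (k + 1)) * h (k + 1))) := by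
    intro k
    have hr := hrecS (k + 1)
    simp only [show k + 1 + 1 = k + 2 from rfl, show k + 1 + 2 = k + 3 from rfl] at hr
    rw [hr, LLstmt4_sub, LLstmt4_add, LLstmt4_smul, LLstmt4_smul,
      horth' (k + 3) (k + 1) (by omega), horth' (k + 2) (k + 1) (by omega), hLself k]
    ring
  -- ⟨X² p_k, p_m⟩ = 0 for k + 3 ≤ m
  have hLX2zero : ∀ k mm, k + 3 ≤ mm → LLstmt4 s (X ^ 2 * p k) (p mm) = 0 := by
    intro k
    induction k with
    | zero =>
      intro mm hm
      rw [hX20, LLstmt4_sub, LLstmt4_smul, hLX 1 mm (by omega), hLX 0 mm (by omega)]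
      ring
    | succ k ih =>
      intro mm hm
      rw [hrecS2 k, LLstmt4_sub, LLstmt4_add, LLstmt4_smul, LLstmt4_smul,
        hLX (k + 2) mm (by omega), hLX (k + 1) mm (by omega), ih mm (by omega)]
      ring
  -- ⟨X² p_k, p_{k+2}⟩ = h_{k+2}
  have hLX2two : ∀ k, LLstmt4 s (X ^ 2 * p k) (p (k + 2)) = h (k + 2) := by
    intro k
    cases k with
    | zero =>
      rw [hX20, LLstmt4_sub, LLstmt4_smul, hLone 1, hLX 0 2 (by omega)]
      ring
    | succ k =>
      simp only [show k + 1 + 2 = k + 3 from rfl]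
      have h1 := hLone (k + 2)
      simp only [show k + 2 + 1 = k + 3 from rfl] at h1
      rw [hrecS2 k, LLstmt4_sub, LLstmt4_add, LLstmt4_smul, LLstmt4_smul,
        h1, hLX (k + 1) (k + 3) (by omega), hLX2zero k (k + 3) (by omega)]
      ring
  -- main computation
  have hr2 := hrecS2 (m + 1)
  simp only [show m + 1 + 1 = m + 2 from rfl, show m + 1 + 2 = m + 3 from rfl] at hr2
  have habove := hLabove (m + 1)
  simp only [show m + 1 + 1 = m + 2 from rfl, show m + 1 + 2 = m + 3 from rfl] at habove
  have hselfv := hLself (m + 1)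
  simp only [show m + 1 + 1 = m + 2 from rfl] at hselfv
  have honev := hLone (m + 1)
  simp only [show m + 1 + 1 = m + 2 from rfl] at honev
  have htwov := hLX2two m
  have hmain : LLstmt4 s (X ^ 2 * p (m + 2)) (p (m + 2)) =
      -(Cn (m + 3) * (Bn (m + 2) - Cn (m + 2)) - (Bn (m + 2) - Cn (m + 2)) ^ 2 +
        Cn (m + 2) * (Bn (m + 1) - Cn (m + 1))) * h (m + 2) := by
    rw [hr2, hrecS2 m]
    simp only [LLstmt4_sub, LLstmt4_add, LLstmt4_smul]
    rw [habove, hselfv, honev, htwov]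
    ring
  have hfun : (fun z : ℂ => z ^ 2 * (p (m + 2)).eval z * (p (m + 2)).eval z⁻¹ *
        Complex.exp (s * (z + z⁻¹)) / z)
      = fun z : ℂ => (X ^ 2 * p (m + 2)).eval z * (p (m + 2)).eval z⁻¹ *
        Complex.exp (s * (z + z⁻¹)) / z := by
    funext z
    simp only [Polynomial.eval_mul, Polynomial.eval_pow, Polynomial.eval_X]
  simp only [show m + 2 + 1 = m + 3 from rfl, show m + 2 - 1 = m + 1 from rfl]
  rw [show (∮ z in C(0, 1), z ^ 2 * (p (m + 2)).eval z * (p (m + 2)).eval z⁻¹ *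
        Complex.exp (s * (z + z⁻¹)) / z) =
      LLstmt4 s (X ^ 2 * p (m + 2)) (p (m + 2)) from by unfold LLstmt4; rw [hfun]]
  exact hmain
end

section
/- With the fixed-s orthogonal family setup, for every n ≥ 1 one has ∮_{|z|=1} z² · p_n′(z) · p_n(1/z) dμ = ( n·(b_{n−1} − b_n) − b_{n−1} ) · h_n, where b_{n−1} is the coefficient of z^{n−1} in p_n and b_n is the coefficient of z^n in p_{n+1}, and p_n′ denotes the derivative of p_n. -/
/-!
The functional `q ↦ ∮ q(z) p_n(1/z) dμ` is linear and, by orthogonality, kills `p_m` for every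
`m ≠ n`; since `p_0, …, p_{n-1}` span the polynomials of degree `< n`, it kills all of them.
Comparing the two top coefficients, `z² p_n′ - n p_{n+1} - c p_n` has degree `< n` for
`c = n (b_{n-1} - b_n) - b_{n-1}`, so the integral of `z² p_n′` against `p_n(1/z)` is `c h_n`.
-/

open Polynomial

theorem Polynomial.Sequence.linearMap_eq_zero_of_degree_lt {R M : Type*} [Ring R]
    [AddCommMonoid M] [Module R M] (S : Sequence R) (L : R[X] →ₗ[R] M) {n : ℕ}
    (hS : ∀ i < n, IsUnit (S i).leadingCoeff) (hL : ∀ i < n, L (S i) = 0) {q : R[X]}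
    (hq : q.degree < n) : L q = 0 := by
  have hker : degreeLT R n ≤ LinearMap.ker L := by
    rw [← S.span_degreeLT hS, Submodule.span_le]
    rintro _ ⟨i, hi, rfl⟩
    exact hL i hi
  exact hker (mem_degreeLT.mpr hq)

theorem Polynomial.coeff_X_mul_derivative {R : Type*} [CommSemiring R] (p : R[X]) (m : ℕ) :
    (X * derivative p).coeff m = m * p.coeff m := by
  cases m with
  | zero => simp
  | succ j => rw [coeff_X_mul, coeff_derivative, mul_comm]; push_cast; rfl

theorem Polynomial.degree_X_sq_mul_derivative_sub_lt {R : Type*} [CommRing R] {p P : R[X]}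
    {n : ℕ} (hn : 1 ≤ n) (hp : p.Monic) (hpdeg : p.natDegree = n) (hP : P.Monic)
    (hPdeg : P.natDegree = n + 1) :
    (X ^ 2 * derivative p - (n : R) • P -
      ((n : R) * (p.coeff (n - 1) - P.coeff n) - p.coeff (n - 1)) • p).degree <
      (n : WithBot ℕ) := by
  obtain ⟨k, rfl⟩ : ∃ k, n = k + 1 := ⟨n - 1, by omega⟩
  rw [degree_lt_iff_coeff_zero]
  intro m hm
  obtain ⟨j, rfl⟩ : ∃ j, m = j + 1 := ⟨m - 1, by omega⟩
  have hlead : ∀ {f : R[X]} {d : ℕ}, f.Monic → f.natDegree = d → f.coeff d = 1 :=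
    fun hf hfd => hfd ▸ hf.coeff_natDegree
  have hpzero : ∀ i, k + 1 < i → p.coeff i = 0 := fun i hi =>
    coeff_eq_zero_of_natDegree_lt (hpdeg ▸ hi)
  have hPzero : ∀ i, k + 2 < i → P.coeff i = 0 := fun i hi =>
    coeff_eq_zero_of_natDegree_lt (hPdeg ▸ hi)
  simp only [coeff_sub, coeff_smul, smul_eq_mul, pow_two, mul_assoc, coeff_X_mul,
    coeff_X_mul_derivative, Nat.add_sub_cancel]
  obtain rfl | rfl | hj : j = k ∨ j = k + 1 ∨ k + 2 ≤ j := by omega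
  · rw [hlead hp hpdeg]
    push_cast
    ring
  · rw [hlead hp hpdeg, hlead hP hPdeg, hpzero (k + 2) (by omega)]
    push_cast
    ring
  · rw [hpzero j (by omega), hpzero (j + 1) (by omega), hPzero (j + 1) (by omega)]
    ring

noncomputable def circleMoment {c : ℂ} {R : ℝ} {f : ℂ → ℂ} (hf : CircleIntegrable f c R) :
    ℂ[X] →ₗ[ℂ] ℂ where
  toFun q := ∮ z in C(c, R), q.eval z * f z
  map_add' q r := by
    have hq : CircleIntegrable (fun z => q.eval z * f z) c R :=
      hf.continuousOn_mul q.continuous.continuousOn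
    have hr : CircleIntegrable (fun z => r.eval z * f z) c R :=
      hf.continuousOn_mul r.continuous.continuousOn
    simp only [eval_add, add_mul]
    exact circleIntegral.integral_add hq hr
  map_smul' a q := by
    simp only [eval_smul, smul_eq_mul, mul_assoc, RingHom.id_apply]
    exact circleIntegral.integral_smul a _ c R

theorem circleMoment_apply {c : ℂ} {R : ℝ} {f : ℂ → ℂ} (hf : CircleIntegrable f c R)
    (q : ℂ[X]) : circleMoment hf q = ∮ z in C(c, R), q.eval z * f z :=
  rfl

theorem circleIntegrable_eval_inv_mul_exp_div (r : ℂ[X]) (s : ℂ) {R : ℝ} (hR : R ≠ 0) :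
    CircleIntegrable (fun z => r.eval z⁻¹ * Complex.exp (s * (z + z⁻¹)) / z) 0 R := by
  refine ContinuousOn.circleIntegrable' fun z hz => ?_
  have hz0 : z ≠ 0 := Metric.ne_of_mem_sphere hz (abs_ne_zero.mpr hR)
  fun_prop (disch := exact hz0)

theorem stmt_6_general (s : ℝ)
    (p : ℕ → Polynomial ℂ)
    (hmonic : ∀ n, (p n).Monic)
    (hdeg : ∀ n, (p n).natDegree = n)
    (horth : ∀ n m, n ≠ m →
      (∮ z in C(0, 1), (p n).eval z * (p m).eval z⁻¹ *
        Complex.exp (s * (z + z⁻¹)) / z) = 0)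
    (h : ℕ → ℂ)
    (hh : ∀ n, h n = ∮ z in C(0, 1), (p n).eval z * (p n).eval z⁻¹ *
        Complex.exp (s * (z + z⁻¹)) / z)
    (n : ℕ) (hn : 1 ≤ n) :
    (∮ z in C(0, 1), z ^ 2 * ((Polynomial.derivative (p n)).eval z) * (p n).eval z⁻¹ *
        Complex.exp (s * (z + z⁻¹)) / z) =
      ((n : ℂ) * ((p n).coeff (n - 1) - (p (n + 1)).coeff n) - (p n).coeff (n - 1)) * h n := by
  set L := circleMoment (circleIntegrable_eval_inv_mul_exp_div (p n) s one_ne_zero)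
  have hL : ∀ q : ℂ[X], L q = ∮ z in C(0, 1), q.eval z * (p n).eval z⁻¹ *
      Complex.exp (s * (z + z⁻¹)) / z := fun q => by
    simp only [L, circleMoment_apply, mul_div_assoc, mul_assoc]
  have hLorth : ∀ m, m ≠ n → L (p m) = 0 := fun m hm => (hL _).trans (horth m n hm)
  let S : Sequence ℂ :=
    ⟨p, fun i => (degree_eq_iff_natDegree_eq (hmonic i).ne_zero).mpr (hdeg i)⟩
  have hrest := S.linearMap_eq_zero_of_degree_lt L
    (fun i _ => (hmonic i).leadingCoeff ▸ isUnit_one) (fun i hi => hLorth i hi.ne)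
    (degree_X_sq_mul_derivative_sub_lt hn (hmonic n) (hdeg n) (hmonic (n + 1)) (hdeg (n + 1)))
  rw [map_sub, map_sub, map_smul, map_smul, hLorth (n + 1) (by omega), hL (p n), ← hh,
    smul_eq_mul, smul_eq_mul, mul_zero, sub_zero, sub_eq_zero] at hrest
  rw [← hrest, hL]
  simp only [eval_mul, eval_pow, eval_X]

/-- Lemma 4: `∮ z²·p_n′(z)·p_n(1/z) dμ = (n(b_{n−1} − b_n) − b_{n−1})·h_n` for `n ≥ 1`,
where `b_{n−1}` is the coefficient of `z^{n−1}` in `p_n` and `b_n` that of `z^n` in `p_{n+1}`. -/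
theorem stmt_6 (s : ℝ) (hs : 0 < s)
    (p : ℕ → Polynomial ℂ)
    (hmonic : ∀ n, (p n).Monic)
    (hdeg : ∀ n, (p n).natDegree = n)
    (hreal : ∀ n k, ((p n).coeff k).im = 0)
    (hp0 : ∀ n, (p n).coeff 0 ≠ 0)
    (horth : ∀ n m, n ≠ m →
      (∮ z in C(0, 1), (p n).eval z * (p m).eval z⁻¹ *
        Complex.exp (s * (z + z⁻¹)) / z) = 0)
    (h : ℕ → ℂ)
    (hh : ∀ n, h n = ∮ z in C(0, 1), (p n).eval z * (p n).eval z⁻¹ *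
        Complex.exp (s * (z + z⁻¹)) / z)
    (hne : ∀ n, h n ≠ 0)
    (n : ℕ) (hn : 1 ≤ n) :
    (∮ z in C(0, 1), z ^ 2 * ((Polynomial.derivative (p n)).eval z) * (p n).eval z⁻¹ *
        Complex.exp (s * (z + z⁻¹)) / z) =
      ((n : ℂ) * ((p n).coeff (n - 1) - (p (n + 1)).coeff n) - (p n).coeff (n - 1)) * h n :=
  stmt_6_general s p hmonic hdeg horth h hh n hn
end

section
/- With the fixed-s orthogonal family setup, for every n ≥ 0 one has ∮_{|z|=1} p_{n+1}(z) · p_n(1/z) · exp(s(z + 1/z)) dz = (1/s)·b_n·h_n + h_{n+1}, where b_n is the coefficient of z^n in p_{n+1}. (Note the integral here is against exp(s(z+1/z)) dz, not dμ = exp(s(z+1/z)) dz/z.) -/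
/-!
Let `⟨a, b⟩ = ∮ a(z) b(1/z) e^{s(z+1/z)} dz/z`, so that `(p_n)` is orthogonal for `⟨·,·⟩` and
`h_n = ⟨p_n, p_n⟩`. The integral in question is `⟨X p_{n+1}, p_n⟩`. Since `∮ F' dz = 0` for
`F(z) = P(z) Q(1/z) e^{s(z+1/z)}`, and `z F'(z)` expands into pairings, one gets
`s ⟨X P, Q⟩ = s ⟨P, X Q⟩ + ⟨P, X Q'⟩ - ⟨X P', Q⟩`. For `P = p_{n+1}`, `Q = p_n` orthogonality
evaluates the right-hand side: `X Q` is monic of degree `n + 1`, `X Q'` has degree `n`, and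
`X P' - (n + 1) P` has degree `n` with leading coefficient `-b_n`.
-/

open Polynomial

namespace Polynomial

variable {R : Type*} [CommRing R]

theorem coeff_X_mul_derivative_s9 (P : R[X]) (k : ℕ) :
    (X * derivative P).coeff k = k * P.coeff k := by
  cases k with
  | zero => simp
  | succ k => rw [coeff_X_mul, coeff_derivative]; push_cast; ring

theorem degree_X_mul_derivative_le (P : R[X]) : (X * derivative P).degree ≤ P.degree := by
  refine (degree_le_iff_coeff_zero _ _).mpr fun k hk => ?_
  rw [coeff_X_mul_derivative_s9, coeff_eq_zero_of_degree_lt hk, mul_zero]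

theorem degree_X_mul_derivative_sub_smul_lt {P : R[X]} {d : ℕ} (hP : P.degree ≤ d) :
    (X * derivative P - (d : R) • P).degree < ↑d := by
  refine (degree_lt_iff_coeff_zero _ _).mpr fun k hk => ?_
  rcases hk.eq_or_lt with rfl | hk
  · simp [coeff_X_mul_derivative_s9]
  · simp [coeff_X_mul_derivative_s9,
      coeff_eq_zero_of_degree_lt (hP.trans_lt (WithBot.coe_lt_coe.mpr hk))]

theorem degree_sub_coeff_smul_lt {a q : R[X]} {d : ℕ} (hq : q.Monic) (hqd : q.natDegree = d)
    (ha : a.degree ≤ d) : (a - a.coeff d • q).degree < d := by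
  refine (degree_lt_iff_coeff_zero _ _).mpr fun k hk => ?_
  rcases hk.eq_or_lt with rfl | hk
  · simp [← hqd, hq.coeff_natDegree]
  · simp [coeff_eq_zero_of_degree_lt (ha.trans_lt (WithBot.coe_lt_coe.mpr hk)),
      coeff_eq_zero_of_natDegree_lt (hqd ▸ hk)]

end Polynomial

namespace LinearMap

variable {R : Type*} [CommRing R] (β : R[X] →ₗ[R] R[X] →ₗ[R] R)

theorem apply_eq_mul_add_sub_smul (c : R) (a q b : R[X]) :
    β a b = c * β q b + β (a - c • q) b := by
  rw [← smul_eq_mul, ← smul_apply, ← map_smul, ← add_apply, ← map_add, add_sub_cancel]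

variable {p : ℕ → R[X]} (hmonic : ∀ n, (p n).Monic) (hdeg : ∀ n, (p n).natDegree = n)
include hmonic hdeg

theorem apply_eq_zero_of_degree_lt {m : ℕ} (horth : ∀ k < m, β (p k) (p m) = 0)
    {a : R[X]} (ha : a.degree < m) : β a (p m) = 0 := by
  suffices ∀ d ≤ m, ∀ a : R[X], a.degree < d → β a (p m) = 0 from this m le_rfl a ha
  intro d
  induction d with
  | zero => simp
  | succ d ih =>
    intro hd a ha
    rw [β.apply_eq_mul_add_sub_smul (a.coeff d) a (p d), horth d hd, mul_zero, zero_add]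
    exact ih (by omega) _ (degree_sub_coeff_smul_lt (hmonic d) (hdeg d) (Order.le_of_lt_succ ha))

theorem apply_eq_coeff_mul_of_degree_le {m : ℕ} (horth : ∀ k < m, β (p k) (p m) = 0)
    {a : R[X]} (ha : a.degree ≤ m) : β a (p m) = a.coeff m * β (p m) (p m) := by
  rw [β.apply_eq_mul_add_sub_smul (a.coeff m) a (p m), β.apply_eq_zero_of_degree_lt hmonic hdeg
    horth (degree_sub_coeff_smul_lt (hmonic m) (hdeg m) ha), add_zero]

variable (horth : ∀ k m, k ≠ m → β (p k) (p m) = 0)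
include horth

theorem apply_X_mul_derivative_left (n : ℕ) :
    β (X * derivative (p (n + 1))) (p n) = -(p (n + 1)).coeff n * β (p n) (p n) := by
  have hlow : (X * derivative (p (n + 1)) - ((n + 1 : ℕ) : R) • p (n + 1)).degree ≤ ↑n :=
    Order.le_of_lt_succ
      (degree_X_mul_derivative_sub_smul_lt (degree_le_of_natDegree_le (hdeg _).le))
  rw [β.apply_eq_mul_add_sub_smul ((n + 1 : ℕ) : R) _ (p (n + 1)), horth _ _ (by omega),
    mul_zero, zero_add,
    β.apply_eq_coeff_mul_of_degree_le hmonic hdeg (fun k hk => horth _ _ hk.ne) hlow]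
  simp only [coeff_sub, coeff_smul, coeff_X_mul_derivative_s9, smul_eq_mul]
  push_cast
  ring

theorem apply_X_mul_derivative_right (n : ℕ) : β (p (n + 1)) (X * derivative (p n)) = 0 := by
  have hlow : (X * derivative (p n)).degree < ↑(n + 1) :=
    (degree_X_mul_derivative_le _).trans_lt <| (degree_le_of_natDegree_le (hdeg n).le).trans_lt <|
      by exact_mod_cast n.lt_succ_self
  rw [← flip_apply, β.flip.apply_eq_zero_of_degree_lt hmonic hdeg (fun k hk => horth _ _ hk.ne')
    hlow]

theorem apply_X_mul_right (n : ℕ) : β (p (n + 1)) (X * p n) = β (p (n + 1)) (p (n + 1)) := by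
  have hle : (X * p n).degree ≤ ↑(n + 1) := by
    refine degree_le_of_natDegree_le (natDegree_mul_le.trans ?_)
    rw [hdeg, add_comm]
    exact Nat.add_le_add_left natDegree_X_le n
  have hlead : (p n).coeff n = 1 := by simpa [hdeg n] using (hmonic n).coeff_natDegree
  rw [← flip_apply, β.flip.apply_eq_coeff_mul_of_degree_le hmonic hdeg
    (fun k hk => horth _ _ hk.ne') hle, flip_apply, coeff_X_mul, hlead, one_mul]

end LinearMap

open Complex Metric

theorem forall_mem_sphere_zero_one_ne_zero : ∀ z ∈ sphere (0 : ℂ) 1, z ≠ 0 :=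
  fun z hz => ne_zero_of_mem_sphere one_ne_zero ⟨z, hz⟩

theorem circleIntegrable_circlePairing_integrand {w : ℂ → ℂ} (hw : ContinuousOn w (sphere 0 1))
    (a b : ℂ[X]) :
    CircleIntegrable (fun z => a.eval z * b.eval z⁻¹ * w z / z) 0 1 := by
  refine ContinuousOn.circleIntegrable zero_le_one ?_
  fun_prop (disch := exact forall_mem_sphere_zero_one_ne_zero)

noncomputable def circlePairing (w : ℂ → ℂ) (hw : ContinuousOn w (sphere 0 1)) :
    ℂ[X] →ₗ[ℂ] ℂ[X] →ₗ[ℂ] ℂ :=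
  LinearMap.mk₂ ℂ (fun a b => ∮ z in C(0, 1), a.eval z * b.eval z⁻¹ * w z / z)
    (fun a₁ a₂ b => by
      simp only [eval_add, add_mul, add_div]
      exact circleIntegral.integral_add (circleIntegrable_circlePairing_integrand hw _ _)
        (circleIntegrable_circlePairing_integrand hw _ _))
    (fun c a b => by
      simp only [eval_smul, smul_eq_mul, mul_assoc, mul_div_assoc]
      exact circleIntegral.integral_const_mul _ _ _ _)
    (fun a b₁ b₂ => by
      simp only [eval_add, mul_add, add_mul, add_div]
      exact circleIntegral.integral_add (circleIntegrable_circlePairing_integrand hw _ _)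
        (circleIntegrable_circlePairing_integrand hw _ _))
    (fun c a b => by
      simp only [eval_smul, smul_eq_mul, mul_left_comm _ c, mul_assoc, mul_div_assoc]
      exact circleIntegral.integral_const_mul _ _ _ _)

theorem circlePairing_apply {w : ℂ → ℂ} (hw : ContinuousOn w (sphere 0 1)) (a b : ℂ[X]) :
    circlePairing w hw a b = ∮ z in C(0, 1), a.eval z * b.eval z⁻¹ * w z / z := rfl

theorem circlePairing_X_mul_left {w : ℂ → ℂ} (hw : ContinuousOn w (sphere 0 1)) (a b : ℂ[X]) :
    circlePairing w hw (X * a) b = ∮ z in C(0, 1), a.eval z * b.eval z⁻¹ * w z := by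
  rw [circlePairing_apply]
  refine circleIntegral.integral_congr zero_le_one fun z hz => ?_
  have := forall_mem_sphere_zero_one_ne_zero z hz
  simp only [eval_mul, eval_X]
  field_simp

theorem continuousOn_exp_mul_add_inv (s : ℂ) :
    ContinuousOn (fun z => exp (s * (z + z⁻¹))) (sphere 0 1) := by
  fun_prop (disch := exact forall_mem_sphere_zero_one_ne_zero)

noncomputable def expPairing (s : ℂ) : ℂ[X] →ₗ[ℂ] ℂ[X] →ₗ[ℂ] ℂ :=
  circlePairing (fun z => exp (s * (z + z⁻¹))) (continuousOn_exp_mul_add_inv s)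

theorem mul_expPairing_X_mul_left (s : ℂ) (P Q : ℂ[X]) :
    s * expPairing s (X * P) Q =
      s * expPairing s P (X * Q) + expPairing s P (X * derivative Q) -
        expPairing s (X * derivative P) Q := by
  set g := fun (a b : ℂ[X]) (z : ℂ) => a.eval z * b.eval z⁻¹ * exp (s * (z + z⁻¹)) / z
  have hi : ∀ a b, CircleIntegrable (g a b) 0 1 :=
    circleIntegrable_circlePairing_integrand (continuousOn_exp_mul_add_inv s)
  have hderiv : ∀ z ∈ sphere (0 : ℂ) 1,
      HasDerivAt (fun z => P.eval z * Q.eval z⁻¹ * exp (s * (z + z⁻¹)))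
        (g (X * derivative P) Q z - g P (X * derivative Q) z +
          s * (g (X * P) Q z - g P (X * Q) z)) z := by
    intro z hz
    have hz0 := forall_mem_sphere_zero_one_ne_zero z hz
    have hinv := hasDerivAt_inv hz0
    refine (((P.hasDerivAt z).mul ((Q.hasDerivAt z⁻¹).comp z hinv)).mul
      (((hasDerivAt_id z).add hinv).const_mul s).cexp).congr_deriv ?_
    simp only [g, eval_mul, eval_X, Pi.mul_apply, Pi.add_apply, id_eq, Function.comp_apply]
    field_simp
    ring
  have hint := circleIntegral.integral_eq_zero_of_hasDerivWithinAt zero_le_one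
    fun z hz => (hderiv z hz).hasDerivWithinAt
  have hsub : ∀ a₁ b₁ a₂ b₂, CircleIntegrable (fun z => g a₁ b₁ z - g a₂ b₂ z) 0 1 :=
    fun _ _ _ _ => (hi _ _).fun_sub (hi _ _)
  have hsmul : CircleIntegrable (fun z => s * (g (X * P) Q z - g P (X * Q) z)) 0 1 :=
    (hsub _ _ _ _).const_fun_smul (a := s)
  rw [circleIntegral.integral_add (hsub _ _ _ _) hsmul, circleIntegral.integral_const_mul,
    circleIntegral.integral_sub (hi _ _) (hi _ _),
    circleIntegral.integral_sub (hi _ _) (hi _ _)] at hint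
  simp only [expPairing, circlePairing_apply]
  linear_combination hint

theorem stmt_9_general (s : ℝ) (hs : 0 < s)
    (p : ℕ → Polynomial ℂ)
    (hmonic : ∀ n, (p n).Monic)
    (hdeg : ∀ n, (p n).natDegree = n)
    (horth : ∀ n m, n ≠ m →
      (∮ z in C(0, 1), (p n).eval z * (p m).eval z⁻¹ *
        Complex.exp (s * (z + z⁻¹)) / z) = 0)
    (h : ℕ → ℂ)
    (hh : ∀ n, h n = ∮ z in C(0, 1), (p n).eval z * (p n).eval z⁻¹ *
        Complex.exp (s * (z + z⁻¹)) / z)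
    (n : ℕ) :
    (∮ z in C(0, 1), (p (n + 1)).eval z * (p n).eval z⁻¹ *
        Complex.exp (s * (z + z⁻¹))) =
      (1 / (s : ℂ)) * (p (n + 1)).coeff n * h n + h (n + 1) := by
  have horth' : ∀ k m, k ≠ m → expPairing s (p k) (p m) = 0 := horth
  have hh' : ∀ m, expPairing s (p m) (p m) = h m := fun m => (hh m).symm
  have key := mul_expPairing_X_mul_left s (p (n + 1)) (p n)
  rw [(expPairing s).apply_X_mul_right hmonic hdeg horth' n,
    (expPairing s).apply_X_mul_derivative_right hmonic hdeg horth' n,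
    (expPairing s).apply_X_mul_derivative_left hmonic hdeg horth' n, hh', hh'] at key
  have hT : (∮ z in C(0, 1), (p (n + 1)).eval z * (p n).eval z⁻¹ *
      Complex.exp (s * (z + z⁻¹))) = expPairing s (X * p (n + 1)) (p n) :=
    (circlePairing_X_mul_left _ _ _).symm
  have hs0 : (s : ℂ) ≠ 0 := by exact_mod_cast hs.ne'
  rw [hT]
  field_simp
  linear_combination key

/-- `∮ p_{n+1}(z)·p_n(1/z)·e^{s(z+1/z)} dz = (1/s)·b_n·h_n + h_{n+1}` for `n ≥ 0`,
where `b_n` is the coefficient of `z^n` in `p_{n+1}`. -/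
theorem stmt_9 (s : ℝ) (hs : 0 < s)
    (p : ℕ → Polynomial ℂ)
    (hmonic : ∀ n, (p n).Monic)
    (hdeg : ∀ n, (p n).natDegree = n)
    (hreal : ∀ n k, ((p n).coeff k).im = 0)
    (hp0 : ∀ n, (p n).coeff 0 ≠ 0)
    (horth : ∀ n m, n ≠ m →
      (∮ z in C(0, 1), (p n).eval z * (p m).eval z⁻¹ *
        Complex.exp (s * (z + z⁻¹)) / z) = 0)
    (h : ℕ → ℂ)
    (hh : ∀ n, h n = ∮ z in C(0, 1), (p n).eval z * (p n).eval z⁻¹ *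
        Complex.exp (s * (z + z⁻¹)) / z)
    (hne : ∀ n, h n ≠ 0)
    (n : ℕ) :
    (∮ z in C(0, 1), (p (n + 1)).eval z * (p n).eval z⁻¹ *
        Complex.exp (s * (z + z⁻¹))) =
      (1 / (s : ℂ)) * (p (n + 1)).coeff n * h n + h (n + 1) :=
  stmt_9_general s hs p hmonic hdeg horth h hh n
end

section
/- With the fixed-s orthogonal family setup, for every n ≥ 1 one has ∮_{|z|=1} z · p_{n+1}(z) · p_n(1/z) dμ = −C_{n+1}·(B_n − C_n)·h_n. -/
open Polynomial

noncomputable def Ig10 (s : ℝ) (a b : Polynomial ℂ) : ℂ :=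
  ∮ z in C(0, 1), a.eval z * b.eval z⁻¹ * Complex.exp (s * (z + z⁻¹)) / z

lemma intg10 (s : ℝ) (a b : Polynomial ℂ) :
    CircleIntegrable (fun z => a.eval z * b.eval z⁻¹ * Complex.exp (s * (z + z⁻¹)) / z) 0 1 := by
  apply ContinuousOn.circleIntegrable zero_le_one
  intro z hz
  have hz0 : z ≠ 0 := by intro h0; rw [h0] at hz; simp at hz
  apply ContinuousAt.continuousWithinAt
  have hinv : ContinuousAt (fun z : ℂ => z⁻¹) z := continuousAt_inv₀ hz0
  exact (((a.continuousAt).mul ((b.continuousAt).comp hinv)).mul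
    ((Complex.continuous_exp.continuousAt).comp
      (continuousAt_const.mul (continuousAt_id.add hinv)))).div continuousAt_id hz0

open circleIntegral in
lemma Ig10_sub (s : ℝ) (a b m : Polynomial ℂ) :
    Ig10 s (a - b) m = Ig10 s a m - Ig10 s b m := by
  unfold Ig10
  rw [← integral_sub (intg10 s a m) (intg10 s b m)]
  refine integral_congr zero_le_one fun z _ => ?_
  simp only [eval_sub]; ring

lemma Ig10_add (s : ℝ) (a b m : Polynomial ℂ) :
    Ig10 s (a + b) m = Ig10 s a m + Ig10 s b m := by
  have := Ig10_sub s (a + b) b m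
  rw [add_sub_cancel_right] at this
  linear_combination -this

open circleIntegral in
lemma Ig10_smul (s : ℝ) (c : ℂ) (a m : Polynomial ℂ) :
    Ig10 s (C c * a) m = c * Ig10 s a m := by
  have h1 := integral_smul c (fun z => a.eval z * m.eval z⁻¹ * Complex.exp (s * (z + z⁻¹)) / z) 0 1
  rw [smul_eq_mul] at h1
  unfold Ig10
  rw [← h1]
  refine integral_congr zero_le_one fun z _ => ?_
  simp only [eval_mul, eval_C, smul_eq_mul]; ring

open circleIntegral in
lemma Ig10_add' (s : ℝ) (a b m : Polynomial ℂ) :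
    Ig10 s m (a + b) = Ig10 s m a + Ig10 s m b := by
  have h2 : Ig10 s m (a + b) - Ig10 s m b = Ig10 s m a := by
    unfold Ig10
    rw [← integral_sub (intg10 s m (a + b)) (intg10 s m b)]
    refine integral_congr zero_le_one fun z _ => ?_
    simp only [eval_add]; ring
  linear_combination h2

open circleIntegral in
lemma Ig10_smul' (s : ℝ) (c : ℂ) (a m : Polynomial ℂ) :
    Ig10 s m (C c * a) = c * Ig10 s m a := by
  have h1 := integral_smul c (fun z => m.eval z * a.eval z⁻¹ * Complex.exp (s * (z + z⁻¹)) / z) 0 1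
  rw [smul_eq_mul] at h1
  unfold Ig10
  rw [← h1]
  refine integral_congr zero_le_one fun z _ => ?_
  simp only [eval_mul, eval_C, smul_eq_mul]; ring

lemma Ig10_zero (s : ℝ) (m : Polynomial ℂ) : Ig10 s 0 m = 0 := by
  have := Ig10_smul s 0 1 m
  simpa using this

lemma span_orth10 (s : ℝ) (p : ℕ → Polynomial ℂ)
    (hmonic : ∀ n, (p n).Monic) (hdeg : ∀ n, (p n).natDegree = n)
    (horth : ∀ n m, n ≠ m → Ig10 s (p n) (p m) = 0) :
    ∀ d (q : Polynomial ℂ), q.natDegree ≤ d → ∀ m, d < m → Ig10 s q (p m) = 0 := by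
  intro d
  induction d using Nat.strong_induction_on with
  | _ d IH =>
    intro q hq m hm
    by_cases hq0 : q = 0
    · rw [hq0]; exact Ig10_zero s (p m)
    set c := q.coeff d with hc
    set q' := q - C c * p d with hq'def
    have hpd1 : (p d).coeff d = 1 := by
      have := (hmonic d).leadingCoeff
      rwa [Polynomial.leadingCoeff, hdeg] at this
    have hq'deg : q'.natDegree ≤ d :=
      le_trans (natDegree_sub_le _ _) (max_le hq (le_trans (natDegree_C_mul_le _ _)
        (le_of_eq (hdeg d))))
    have hsplit : q' = 0 ∨ q'.natDegree < d := by
      by_cases h0 : q' = 0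
      · exact Or.inl h0
      right
      have hcd : q'.coeff d = 0 := by
        simp [hq'def, hpd1, hc]
      rcases lt_or_eq_of_le hq'deg with h | h
      · exact h
      · exfalso
        have hl : q'.leadingCoeff = 0 := by
          rw [Polynomial.leadingCoeff, h, hcd]
        exact h0 (leadingCoeff_eq_zero.mp hl)
    have hkey : q = q' + C c * p d := by rw [hq'def]; ring
    rw [hkey, Ig10_add, Ig10_smul, horth d m (Nat.ne_of_lt hm), mul_zero, add_zero]
    rcases hsplit with h0 | hlt
    · rw [h0]; exact Ig10_zero s (p m)
    · exact IH q'.natDegree hlt q' le_rfl m (lt_trans hlt hm)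

/-- `∮ z·p_{n+1}(z)·p_n(1/z) dμ = −C_{n+1}·(B_n − C_n)·h_n` for `n ≥ 1`. -/
theorem stmt_10 (s : ℝ) (hs : 0 < s)
    (p : ℕ → Polynomial ℂ)
    (hmonic : ∀ n, (p n).Monic)
    (hdeg : ∀ n, (p n).natDegree = n)
    (hreal : ∀ n k, ((p n).coeff k).im = 0)
    (hp0 : ∀ n, (p n).coeff 0 ≠ 0)
    (horth : ∀ n m, n ≠ m →
      (∮ z in C(0, 1), (p n).eval z * (p m).eval z⁻¹ *
        Complex.exp (s * (z + z⁻¹)) / z) = 0)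
    (h : ℕ → ℂ)
    (hh : ∀ n, h n = ∮ z in C(0, 1), (p n).eval z * (p n).eval z⁻¹ *
        Complex.exp (s * (z + z⁻¹)) / z)
    (hne : ∀ n, h n ≠ 0)
    (Bn Cn : ℕ → ℂ)
    (hB : ∀ n, Bn n = -((p (n + 1)).coeff 0 / (p n).coeff 0))
    (hC : ∀ n, 1 ≤ n → Cn n = Bn n * h n / h (n - 1))
    (hrec : ∀ n, 1 ≤ n →
      Polynomial.X * (p n + Polynomial.C (Cn n) * p (n - 1)) =
        p (n + 1) + Polynomial.C (Bn n) * p n)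
    (n : ℕ) (hn : 1 ≤ n) :
    (∮ z in C(0, 1), z * (p (n + 1)).eval z * (p n).eval z⁻¹ *
        Complex.exp (s * (z + z⁻¹)) / z) = -(Cn (n + 1)) * (Bn n - Cn n) * h n := by
  -- reformulate hypotheses in terms of `Ig10`
  have horthI : ∀ a b, a ≠ b → Ig10 s (p a) (p b) = 0 := fun a b hab => horth a b hab
  have hhI : ∀ k, h k = Ig10 s (p k) (p k) := fun k => hh k
  -- the LHS as an `Ig10`
  have lhs_eq : (∮ z in C(0, 1), z * (p (n + 1)).eval z * (p n).eval z⁻¹ *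
        Complex.exp (s * (z + z⁻¹)) / z) = Ig10 s (X * p (n + 1)) (p n) := by
    refine circleIntegral.integral_congr zero_le_one fun z _ => ?_
    simp only [eval_mul, eval_X]
  -- recursion at `n+1`
  have hrec1 := hrec (n + 1) (by omega)
  simp only [Nat.add_sub_cancel] at hrec1
  have e1 : X * p (n + 1) =
      p (n + 2) + C (Bn (n + 1)) * p (n + 1) - C (Cn (n + 1)) * (X * p n) := by
    linear_combination hrec1
  -- recursion at `n`
  have hrec2 := hrec n hn
  have e2 : X * p n = p (n + 1) + C (Bn n) * p n - C (Cn n) * (X * p (n - 1)) := by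
    linear_combination hrec2
  -- `Bn n ≠ 0`
  have hBne : Bn n ≠ 0 := by
    rw [hB n]
    simp only [ne_eq, neg_eq_zero, _root_.div_eq_zero_iff, not_or]
    exact ⟨hp0 (n + 1), hp0 n⟩
  -- step 3 : `J = Ig10 s (X * p (n-1)) (p n) = h n`
  have e3 : Ig10 s (p (n - 1)) (p n + C (Cn n) * p (n - 1)) =
      Ig10 s (X * p (n - 1)) (p (n + 1) + C (Bn n) * p n) := by
    refine circleIntegral.integral_congr zero_le_one fun z hz => ?_
    have hz0 : z ≠ 0 := by intro h0; rw [h0] at hz; simp at hz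
    have hw := congrArg (Polynomial.eval z⁻¹) hrec2
    simp only [eval_mul, eval_add, eval_X, eval_C] at hw
    have hzz : z * z⁻¹ = 1 := mul_inv_cancel₀ hz0
    have hw2 : eval z⁻¹ (p n) + Cn n * eval z⁻¹ (p (n - 1)) =
        z * (eval z⁻¹ (p (n + 1)) + Bn n * eval z⁻¹ (p n)) := by
      have := congrArg (fun t => z * t) hw
      calc eval z⁻¹ (p n) + Cn n * eval z⁻¹ (p (n - 1))
          = z * (z⁻¹ * (eval z⁻¹ (p n) + Cn n * eval z⁻¹ (p (n - 1)))) := by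
            rw [← mul_assoc, hzz, one_mul]
        _ = z * (eval z⁻¹ (p (n + 1)) + Bn n * eval z⁻¹ (p n)) := by rw [hw]
    simp only [eval_mul, eval_add, eval_X, eval_C, div_eq_mul_inv]
    linear_combination (eval z (p (n - 1)) * Complex.exp (↑s * (z + z⁻¹)) * z⁻¹) * hw2
  have hJ : Ig10 s (X * p (n - 1)) (p n) = h n := by
    rw [Ig10_add', Ig10_smul', Ig10_add', Ig10_smul'] at e3
    have hdegX : (X * p (n - 1)).natDegree ≤ n := by
      refine le_trans (natDegree_mul_le) ?_
      rw [natDegree_X, hdeg]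
      omega
    have hz1 : Ig10 s (p (n - 1)) (p n) = 0 := horthI (n - 1) n (by omega)
    have hz2 : Ig10 s (X * p (n - 1)) (p (n + 1)) = 0 :=
      span_orth10 s p hmonic hdeg horthI n (X * p (n - 1)) hdegX (n + 1) (by omega)
    rw [hz1, hz2, ← hhI (n - 1), zero_add, zero_add] at e3
    -- e3 : Cn n * h (n-1) = Bn n * J
    have hCval := hC n hn
    have hhne : h (n - 1) ≠ 0 := hne (n - 1)
    apply mul_left_cancel₀ hBne
    rw [← e3, hCval]
    field_simp
  -- step 2
  have hI2 : Ig10 s (X * p n) (p n) = Bn n * h n - Cn n * h n := by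
    rw [e2, Ig10_sub, Ig10_add, Ig10_smul, Ig10_smul,
      horthI (n + 1) n (by omega), ← hhI n, hJ]
    ring
  -- step 1 and conclusion
  rw [lhs_eq, e1, Ig10_sub, Ig10_add, Ig10_smul, Ig10_smul,
    horthI (n + 2) n (by omega), horthI (n + 1) n (by omega), hI2]
  ring
end

section
/- With the s-dependent orthogonal family setup, for every n ≥ 0 and every s > 0, the function s ↦ h_n(s) is differentiable at s and its derivative equals d/ds h_n(s) = 2 ∮_{|z|=1} z · p_n(z, s) · p_n(1/z, s) · exp(s(z + 1/z)) dz/z. -/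
/-!
Write `⟪q, r⟫_s = ∮ q(z) r(1/z) e^{s(z + 1/z)} dz/z`, so that `h_n(s) = ⟪p_n, p_n⟫_s`. The
substitution `z ↦ 1/z` makes the form symmetric, and differentiating the weight gives
`∂_s ⟪q, r⟫_s = ⟪X q, r⟫_s + ⟪q, X r⟫_s`. Expanding `p_n(·, t)` in monomials with differentiable
coefficients, the product rule yields `h_n' = 2 ⟪p_n', p_n⟫_s + 2 ⟪X p_n, p_n⟫_s`, where `p_n'` is
the coefficientwise derivative. Since `p_n` is monic of degree `n`, `p_n'` has degree `< n`, hence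
lies in the span of `p_0, …, p_{n-1}` and is orthogonal to `p_n`.
-/

open Polynomial Metric Real

theorem hasDerivAt_intervalIntegral_mul_cexp {f w : ℝ → ℂ} (hf : Continuous f)
    (hw : Continuous w) (a b s : ℝ) :
    HasDerivAt (fun t : ℝ => ∫ θ in a..b, f θ * Complex.exp (t * w θ))
      (∫ θ in a..b, f θ * w θ * Complex.exp (s * w θ)) s := by
  have hderiv : ∀ θ (t : ℝ), HasDerivAt (fun t : ℝ => f θ * Complex.exp (t * w θ))
      (f θ * w θ * Complex.exp (t * w θ)) t := fun θ t => by
    simpa [mul_comm, mul_left_comm, mul_assoc] using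
      (((hasDerivAt_id (t : ℂ)).mul_const (w θ)).cexp.comp_ofReal).const_mul (f θ)
  have hbound : ∀ θ, ∀ t ∈ ball s 1,
      ‖f θ * w θ * Complex.exp (t * w θ)‖ ≤ ‖f θ * w θ‖ * Real.exp ((|s| + 1) * ‖w θ‖) := by
    intro θ t ht
    rw [norm_mul _ (Complex.exp _), Complex.norm_exp]
    gcongr
    have ht' : |t| ≤ |s| + 1 := by
      have := abs_sub_abs_le_abs_sub t s
      rw [mem_ball, Real.dist_eq] at ht
      linarith
    calc (t * w θ).re ≤ ‖(t : ℂ) * w θ‖ := Complex.re_le_norm _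
      _ = |t| * ‖w θ‖ := by rw [norm_mul, Complex.norm_real, Real.norm_eq_abs]
      _ ≤ (|s| + 1) * ‖w θ‖ := by gcongr
  exact (intervalIntegral.hasDerivAt_integral_of_dominated_loc_of_deriv_le
    (ball_mem_nhds s one_pos)
    (Filter.Eventually.of_forall fun t => (by fun_prop : Continuous _).aestronglyMeasurable)
    ((by fun_prop : Continuous _).intervalIntegrable a b)
    (by fun_prop : Continuous _).aestronglyMeasurable
    (Filter.Eventually.of_forall fun θ _ => hbound θ)
    ((by fun_prop : Continuous _).intervalIntegrable a b)
    (Filter.Eventually.of_forall fun θ _ t _ => hderiv θ t)).2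

theorem hasDerivAt_circleAverage_mul_cexp {f w : ℂ → ℂ} {c : ℂ} {R : ℝ}
    (hf : ContinuousOn f (sphere c |R|)) (hw : ContinuousOn w (sphere c |R|)) (s : ℝ) :
    HasDerivAt (fun t : ℝ => circleAverage (fun z => f z * Complex.exp (t * w z)) c R)
      (circleAverage (fun z => f z * w z * Complex.exp (s * w z)) c R) s := by
  have hcirc : ∀ {g : ℂ → ℂ}, ContinuousOn g (sphere c |R|) →
      Continuous fun θ => g (circleMap c R θ) := fun hg =>
    hg.comp_continuous (continuous_circleMap c R) (circleMap_mem_sphere' c R)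
  simp only [circleAverage_def]
  exact (hasDerivAt_intervalIntegral_mul_cexp (hcirc hf) (hcirc hw) _ _ s).const_smul _

theorem circleIntegral_div_eq_circleAverage (f : ℂ → ℂ) :
    (∮ z in C(0, 1), f z / z) = 2 * π * Complex.I * circleAverage f 0 1 := by
  rw [circleAverage_eq_circleIntegral one_ne_zero, smul_eq_mul, ← mul_assoc,
    mul_inv_cancel₀ (by simp [pi_ne_zero]), one_mul]
  simp only [sub_zero, smul_eq_mul, div_eq_inv_mul]

theorem HasDerivAt.bilinear_sum_smul {M ι : Type*} [AddCommGroup M] [Module ℂ M]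
    {B : ℝ → M →ₗ[ℂ] M →ₗ[ℂ] ℂ} {B' : M →ₗ[ℂ] M →ₗ[ℂ] ℂ} {s : ℝ}
    (hB : ∀ x y, HasDerivAt (fun t => B t x y) (B' x y) s)
    (I : Finset ι) (v : ι → M) {a : ι → ℝ → ℂ} {a' : ι → ℂ}
    (ha : ∀ i ∈ I, HasDerivAt (a i) (a' i) s) :
    HasDerivAt (fun t => B t (∑ i ∈ I, a i t • v i) (∑ i ∈ I, a i t • v i))
      (B s (∑ i ∈ I, a' i • v i) (∑ i ∈ I, a i s • v i)
        + B s (∑ i ∈ I, a i s • v i) (∑ i ∈ I, a' i • v i)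
        + B' (∑ i ∈ I, a i s • v i) (∑ i ∈ I, a i s • v i)) s := by
  have expand : ∀ (β : M →ₗ[ℂ] M →ₗ[ℂ] ℂ) (b c : ι → ℂ), β (∑ i ∈ I, b i • v i)
      (∑ j ∈ I, c j • v j) = ∑ i ∈ I, ∑ j ∈ I, b i * c j * β (v i) (v j) := by
    intro β b c
    simp only [map_sum, map_smul, LinearMap.sum_apply, LinearMap.smul_apply, smul_eq_mul,
      Finset.mul_sum, mul_assoc]
    rw [Finset.sum_comm]
    simp only [mul_left_comm (c _)]
  simp only [expand]
  refine (HasDerivAt.fun_sum fun i hi => HasDerivAt.fun_sum fun j hj =>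
    ((ha i hi).fun_mul (ha j hj)).fun_mul (hB (v i) (v j))).congr_deriv ?_
  simp only [← Finset.sum_add_distrib]
  exact Finset.sum_congr rfl fun i _ => Finset.sum_congr rfl fun j _ => by ring

theorem Polynomial.Sequence.map_eq_zero_of_mem_degreeLT {R M : Type*} [Ring R] [AddCommGroup M]
    [Module R M] (S : Sequence R) {m : ℕ} (hS : ∀ i < m, IsUnit (S i).leadingCoeff)
    (L : R[X] →ₗ[R] M) (hL : ∀ i < m, L (S i) = 0) {q : R[X]} (hq : q ∈ degreeLT R m) :
    L q = 0 := by
  rw [← S.span_degreeLT hS] at hq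
  refine Submodule.span_le (p := LinearMap.ker L) |>.mpr ?_ hq
  rintro _ ⟨i, hi, rfl⟩
  exact hL i hi

theorem sum_deriv_coeff_smul_X_pow_mem_degreeLT {P : ℝ → ℂ[X]} {n : ℕ} {s : ℝ}
    (hlead : (fun t => (P t).coeff n) =ᶠ[nhds s] fun _ => 1) :
    ∑ j ∈ Finset.range (n + 1), deriv (fun t => (P t).coeff j) s • X ^ j ∈ degreeLT ℂ n := by
  rw [Finset.sum_range_succ, hlead.deriv_eq, deriv_const, zero_smul, add_zero]
  refine Submodule.sum_mem _ fun j hj => ?_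
  rw [smul_X_eq_monomial]
  exact monomial_coe_mem_degreeLT ⟨j, Finset.mem_range.mp hj⟩ _

section BesselForm

variable (s : ℝ) (q r : ℂ[X])

theorem continuousOn_besselIntegrand :
    ContinuousOn (fun z => q.eval z * r.eval z⁻¹ * Complex.exp (s * (z + z⁻¹))) (sphere 0 1) := by
  fun_prop (disch := intro z hz; exact ne_of_mem_sphere hz one_ne_zero)

theorem circleIntegrable_besselIntegrand_div :
    CircleIntegrable (fun z => q.eval z * r.eval z⁻¹ * Complex.exp (s * (z + z⁻¹)) / z) 0 1 :=
  ((continuousOn_besselIntegrand s q r).div continuousOn_id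
    fun _ hz => ne_of_mem_sphere hz one_ne_zero).circleIntegrable zero_le_one

/-- The moments `⟪X^j, X^k⟫_s = 2πi I_{j-k}(2s)` are modified Bessel functions. -/
noncomputable def besselForm : ℂ[X] →ₗ[ℂ] ℂ[X] →ₗ[ℂ] ℂ :=
  LinearMap.mk₂ ℂ
    (fun q r => ∮ z in C(0, 1), q.eval z * r.eval z⁻¹ * Complex.exp (s * (z + z⁻¹)) / z)
    (fun q₁ q₂ r => by
      rw [← circleIntegral.integral_add (circleIntegrable_besselIntegrand_div s q₁ r)
        (circleIntegrable_besselIntegrand_div s q₂ r)]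
      congr 1; funext z; simp only [eval_add]; ring)
    (fun c q r => by
      rw [← circleIntegral.integral_smul]
      congr 1; funext z; simp only [eval_smul, smul_eq_mul]; ring)
    (fun q r₁ r₂ => by
      rw [← circleIntegral.integral_add (circleIntegrable_besselIntegrand_div s q r₁)
        (circleIntegrable_besselIntegrand_div s q r₂)]
      congr 1; funext z; simp only [eval_add]; ring)
    (fun c q r => by
      rw [← circleIntegral.integral_smul]
      congr 1; funext z; simp only [eval_smul, smul_eq_mul]; ring)

theorem besselForm_apply : besselForm s q r =
    ∮ z in C(0, 1), q.eval z * r.eval z⁻¹ * Complex.exp (s * (z + z⁻¹)) / z := rfl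

theorem besselForm_eq_circleAverage : besselForm s q r = 2 * π * Complex.I *
    circleAverage (fun z => q.eval z * r.eval z⁻¹ * Complex.exp (s * (z + z⁻¹))) 0 1 := by
  rw [besselForm_apply, circleIntegral_div_eq_circleAverage]

theorem besselForm_comm : besselForm s q r = besselForm s r q := by
  rw [besselForm_eq_circleAverage, besselForm_eq_circleAverage,
    ← circleAverage_zero_one_congr_inv]
  simp only [inv_inv, add_comm _ (_ : ℂ)⁻¹, mul_comm (q.eval _)]

theorem hasDerivAt_besselForm :
    HasDerivAt (fun t => besselForm t q r)
      (besselForm s (X * q) r + besselForm s q (X * r)) s := by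
  have hint : ∀ q r : ℂ[X], CircleIntegrable
      (fun z => q.eval z * r.eval z⁻¹ * Complex.exp (s * (z + z⁻¹))) 0 1 := fun q r =>
    (continuousOn_besselIntegrand s q r).circleIntegrable zero_le_one
  have hf : ContinuousOn (fun z => q.eval z * r.eval z⁻¹) (sphere 0 |1|) := by
    rw [abs_one]
    fun_prop (disch := intro z hz; exact ne_of_mem_sphere hz one_ne_zero)
  have hw : ContinuousOn (fun z : ℂ => z + z⁻¹) (sphere 0 |1|) := by
    rw [abs_one]
    fun_prop (disch := intro z hz; exact ne_of_mem_sphere hz one_ne_zero)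
  simp only [besselForm_eq_circleAverage]
  rw [← mul_add, ← circleAverage_fun_add (hint _ _) (hint _ _)]
  refine HasDerivAt.const_mul _ ?_
  refine (hasDerivAt_circleAverage_mul_cexp hf hw s).congr_deriv
    (circleAverage_congr_sphere fun z _ => ?_)
  simp only [eval_mul, eval_X]
  ring

end BesselForm

theorem stmt_12_general
    (p : ℕ → ℝ → Polynomial ℂ)
    (hmonic : ∀ n s, 0 < s → (p n s).Monic)
    (hdeg : ∀ n s, 0 < s → (p n s).natDegree = n)
    (horth : ∀ (n m : ℕ) (s : ℝ), 0 < s → n ≠ m →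
      (∮ z in C(0, 1), (p n s).eval z * (p m s).eval z⁻¹ *
        Complex.exp (s * (z + z⁻¹)) / z) = 0)
    (h : ℕ → ℝ → ℂ)
    (hh : ∀ (n : ℕ) (s : ℝ), 0 < s → h n s =
      ∮ z in C(0, 1), (p n s).eval z * (p n s).eval z⁻¹ *
        Complex.exp (s * (z + z⁻¹)) / z)
    (hcoeffdiff : ∀ (n k : ℕ), k ≤ n →
      DifferentiableOn ℝ (fun s => (p n s).coeff k) (Set.Ioi (0 : ℝ)))
    (n : ℕ) (s : ℝ) (hs : 0 < s) :
    HasDerivAt (fun t => h n t)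
      (2 * ∮ z in C(0, 1), z * (p n s).eval z * (p n s).eval z⁻¹ *
        Complex.exp (s * (z + z⁻¹)) / z) s := by
  have hsum : ∀ t, 0 < t → p n t = ∑ j ∈ Finset.range (n + 1), (p n t).coeff j • X ^ j :=
    fun t ht => by
      simp only [smul_X_eq_monomial]
      exact as_sum_range' _ _ (by rw [hdeg n t ht]; omega)
  have hcoeff : ∀ j ∈ Finset.range (n + 1), HasDerivAt (fun t => (p n t).coeff j)
      (deriv (fun t => (p n t).coeff j) s) s := fun j hj =>
    ((hcoeffdiff n j (Finset.mem_range_succ_iff.mp hj)).differentiableAt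
      (Ioi_mem_nhds hs)).hasDerivAt
  have hP' := sum_deriv_coeff_smul_X_pow_mem_degreeLT (P := (p n ·)) (n := n) (s := s) <| by
    filter_upwards [Ioi_mem_nhds hs] with t ht
    simpa [hdeg n t ht] using (hmonic n t ht).coeff_natDegree
  have horth' : ∀ q ∈ degreeLT ℂ n, besselForm s q (p n s) = 0 := fun q hq =>
    Sequence.map_eq_zero_of_mem_degreeLT
      ⟨(p · s), fun m => by rw [degree_eq_natDegree (hmonic m s hs).ne_zero, hdeg m s hs]⟩
      (fun i _ => by simp [(hmonic i s hs).leadingCoeff]) ((besselForm s).flip (p n s))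
      (fun i hi => horth i n s hs hi.ne) hq
  refine ((HasDerivAt.bilinear_sum_smul
    (B' := (besselForm s).comp (LinearMap.mulLeft ℂ X)
      + (besselForm s).compl₂ (LinearMap.mulLeft ℂ X))
    (hasDerivAt_besselForm s) (Finset.range (n + 1)) (X ^ ·) hcoeff).congr_of_eventuallyEq
    ?_).congr_deriv ?_
  · filter_upwards [Ioi_mem_nhds hs] with t ht
    rw [hh n t ht, ← hsum t ht, besselForm_apply]
  · rw [← hsum s hs, horth' _ hP', besselForm_comm, horth' _ hP']
    simp only [LinearMap.add_apply, LinearMap.comp_apply, LinearMap.compl₂_apply,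
      LinearMap.mulLeft_apply, besselForm_comm s (p n s) (X * p n s), besselForm_apply,
      eval_mul, eval_X]
    ring

/-- Lemma 6 (derivative of the norming constant): for every `n ≥ 0` and `s > 0`,
`s ↦ h_n(s)` is differentiable and `d/ds h_n(s) = 2 ∮ z·p_n(z,s)·p_n(1/z,s)·e^{s(z+1/z)} dz/z`. -/
theorem stmt_12
    (p : ℕ → ℝ → Polynomial ℂ)
    (hmonic : ∀ n s, 0 < s → (p n s).Monic)
    (hdeg : ∀ n s, 0 < s → (p n s).natDegree = n)
    (hreal : ∀ n s, 0 < s → ∀ k, ((p n s).coeff k).im = 0)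
    (hp0 : ∀ n s, 0 < s → (p n s).coeff 0 ≠ 0)
    (horth : ∀ (n m : ℕ) (s : ℝ), 0 < s → n ≠ m →
      (∮ z in C(0, 1), (p n s).eval z * (p m s).eval z⁻¹ *
        Complex.exp (s * (z + z⁻¹)) / z) = 0)
    (h : ℕ → ℝ → ℂ)
    (hh : ∀ (n : ℕ) (s : ℝ), 0 < s → h n s =
      ∮ z in C(0, 1), (p n s).eval z * (p n s).eval z⁻¹ *
        Complex.exp (s * (z + z⁻¹)) / z)
    (hne : ∀ (n : ℕ) (s : ℝ), 0 < s → h n s ≠ 0)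
    (hcoeffdiff : ∀ (n k : ℕ), k ≤ n →
      DifferentiableOn ℝ (fun s => (p n s).coeff k) (Set.Ioi (0 : ℝ)))
    (n : ℕ) (s : ℝ) (hs : 0 < s) :
    HasDerivAt (fun t => h n t)
      (2 * ∮ z in C(0, 1), z * (p n s).eval z * (p n s).eval z⁻¹ *
        Complex.exp (s * (z + z⁻¹)) / z) s :=
  stmt_12_general p hmonic hdeg horth h hh hcoeffdiff n s hs
end

section
/- With the s-dependent orthogonal family setup, define κ_n(s)² := 2πi/h_n(s), B_n(s) := −p_{n+1}(0,s)/p_n(0,s) and, for n ≥ 1, C_n(s) := B_n(s)·h_n(s)/h_{n−1}(s), and assume the recursion z·(p_n(z,s) + C_n(s) p_{n−1}(z,s)) = p_{n+1}(z,s) + B_n(s) p_n(z,s) holds for all n ≥ 1 and s > 0. Then for every n ≥ 1 and s > 0 with κ_n(s)² ≠ κ_{n−1}(s)²: C_n(s) = −(κ_{n−1}(s)²/(2 κ_n(s)²)) · (d/ds κ_n(s)²)/(κ_n(s)² − κ_{n−1}(s)²). -/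
/-!
Write `⟨q, r⟩ₛ = ∮ q(z) r(1/z) e^{s(z + 1/z)} dz/z`, so that `hₙ(s) = ⟨pₙ, pₙ⟩ₛ`. Differentiating in
`s`, the terms with `∂ₛpₙ` vanish by orthogonality, because `pₙ` is monic of fixed degree `n` and
so `∂ₛpₙ` has degree `< n`; the weight contributes the factor `z + 1/z`, and the symmetry
`z ↦ 1/z` of the weight turns this into `hₙ' = 2⟨z pₙ, pₙ⟩ₛ`. The recurrence
`z pₙ = pₙ₊₁ + Bₙ pₙ - Cₙ z pₙ₋₁` together with `⟨z pₙ₋₁, pₙ⟩ₛ = hₙ` gives `hₙ' = 2(Bₙ - Cₙ) hₙ`.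
Since `κₙ² = 2πi/hₙ` and `Cₙ = Bₙ hₙ/hₙ₋₁`, the formula for `Cₙ` is then pure algebra.
-/

open Polynomial Complex Metric Filter Topology Real Finset

theorem LinearMap.apply_eq_zero_of_degree_lt_s15 {R M : Type*} [CommRing R] [AddCommGroup M]
    [Module R M] (f : R[X] →ₗ[R] M) {P : ℕ → R[X]} (hP : ∀ k, IsMonicOfDegree (P k) k)
    {n : ℕ} (hf : ∀ k < n, f (P k) = 0) {q : R[X]} (hq : q.degree < n) : f q = 0 := by
  induction n generalizing q with
  | zero => simp_all
  | succ n ih =>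
    have hlower : (q - C (q.coeff n) * P n).degree < n := by
      rw [degree_lt_iff_coeff_zero] at hq ⊢
      intro m hm
      have hlead : (P n).coeff n = 1 := by
        simpa [(hP n).natDegree_eq] using (hP n).monic.coeff_natDegree
      rw [coeff_sub, coeff_C_mul]
      rcases hm.eq_or_lt with rfl | hm
      · rw [hlead, mul_one, sub_self]
      · rw [hq m hm, coeff_eq_zero_of_natDegree_lt ((hP n).natDegree_eq.trans_lt hm), mul_zero,
          sub_zero]
    calc f q = q.coeff n • f (P n) + f (q - C (q.coeff n) * P n) := by
          rw [← map_smul, ← map_add, smul_eq_C_mul, add_sub_cancel]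
      _ = 0 := by
        rw [hf n n.lt_succ_self, ih (fun k hk => hf k (hk.trans n.lt_succ_self)) hlower,
          smul_zero, add_zero]

theorem LinearMap.apply_X_mul_of_recurrence {R M : Type*} [CommRing R] [Nontrivial R]
    [AddCommGroup M] [Module R M] (B : R[X] →ₗ[R] R[X] →ₗ[R] M) {P : ℕ → R[X]}
    (hP : ∀ k, IsMonicOfDegree (P k) k) (horth : ∀ k m, k ≠ m → B (P k) (P m) = 0)
    {n : ℕ} (hn : 0 < n) {b c : R}
    (hrec : X * (P n + C c * P (n - 1)) = P (n + 1) + C b * P n) :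
    B (X * P n) (P n) = (b - c) • B (P n) (P n) := by
  have hmonic : IsMonicOfDegree (X * P (n - 1)) n := by
    simpa [Nat.add_sub_cancel' hn] using (isMonicOfDegree_X (R := R)).mul (hP (n - 1))
  have hlower : (X * P (n - 1) - P n).degree < (n : WithBot ℕ) :=
    degree_le_natDegree.trans_lt <| WithBot.coe_lt_coe.mpr <|
      hmonic.natDegree_sub_lt hn.ne' (hP n)
  have hXprev : B (X * P (n - 1)) (P n) = B (P n) (P n) := by
    have hzero := (B.flip (P n)).apply_eq_zero_of_degree_lt_s15 hP (fun k hk => horth k n hk.ne) hlower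
    rw [B.flip_apply] at hzero
    rw [← sub_add_cancel (X * P (n - 1)) (P n), map_add, LinearMap.add_apply, hzero, zero_add]
  have hXP : X * P n = P (n + 1) + C b * P n - C c * (X * P (n - 1)) := by
    linear_combination hrec
  rw [hXP, ← smul_eq_C_mul, ← smul_eq_C_mul]
  simp only [map_sub, map_add, map_smul, LinearMap.sub_apply, LinearMap.add_apply,
    LinearMap.smul_apply, horth (n + 1) n (by omega), hXprev, sub_smul, zero_add]

section CircleAverage

variable {c : ℂ} {R : ℝ}

theorem circleIntegral_div_self_eq_circleAverage (f : ℂ → ℂ) :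
    (∮ z in C(0, 1), f z / z) = 2 * π * I * circleAverage f 0 1 := by
  rw [circleAverage_eq_circleIntegral one_ne_zero, smul_eq_mul, mul_inv_cancel_left₀ (by simp)]
  simp_rw [sub_zero, smul_eq_mul, inv_mul_eq_div]

theorem hasDerivAt_mul_exp_ofReal_mul (a w : ℂ) (t : ℝ) :
    HasDerivAt (fun t : ℝ => a * exp (t * w)) (a * w * exp (t * w)) t := by
  have := (((hasDerivAt_id (t : ℂ)).mul_const w).cexp).comp_ofReal.const_mul a
  simpa [mul_assoc, mul_comm] using this

theorem norm_mul_mul_exp_ofReal_mul_le {a w : ℂ} {A B T t : ℝ} (ha : ‖a‖ ≤ A) (hw : ‖w‖ ≤ B)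
    (ht : |t| ≤ T) : ‖a * w * exp (t * w)‖ ≤ A * B * Real.exp (T * B) := by
  have hexp : ‖exp (t * w)‖ ≤ Real.exp (T * B) := by
    refine (norm_exp_le_exp_norm _).trans (Real.exp_le_exp.mpr ?_)
    rw [norm_mul, norm_real, Real.norm_eq_abs]
    exact mul_le_mul ht hw (norm_nonneg _) ((abs_nonneg t).trans ht)
  rw [norm_mul, norm_mul]
  have hA : 0 ≤ A := (norm_nonneg _).trans ha
  have hB : 0 ≤ B := (norm_nonneg _).trans hw
  gcongr

theorem hasDerivAt_circleAverage_mul_exp {f w : ℂ → ℂ} (hf : ContinuousOn f (sphere c |R|))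
    (hw : ContinuousOn w (sphere c |R|)) (s : ℝ) :
    HasDerivAt (fun t : ℝ => circleAverage (fun z => f z * exp (t * w z)) c R)
      (circleAverage (fun z => f z * w z * exp (s * w z)) c R) s := by
  obtain ⟨A, hA⟩ := (isCompact_sphere c |R|).exists_bound_of_continuousOn hf
  obtain ⟨B, hB⟩ := (isCompact_sphere c |R|).exists_bound_of_continuousOn hw
  have hfc : Continuous fun θ => f (circleMap c R θ) :=
    hf.comp_continuous (continuous_circleMap c R) (circleMap_mem_sphere' c R)
  have hwc : Continuous fun θ => w (circleMap c R θ) :=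
    hw.comp_continuous (continuous_circleMap c R) (circleMap_mem_sphere' c R)
  have hbound (θ t : ℝ) (ht : t ∈ ball s 1) :
      ‖f (circleMap c R θ) * w (circleMap c R θ) * exp (t * w (circleMap c R θ))‖ ≤
        A * B * Real.exp ((|s| + 1) * B) := by
    have ht' : |t| ≤ |s| + 1 := by
      have := abs_sub_abs_le_abs_sub t s
      rw [mem_ball, Real.dist_eq] at ht
      linarith
    exact norm_mul_mul_exp_ofReal_mul_le (hA _ (circleMap_mem_sphere' c R θ))
      (hB _ (circleMap_mem_sphere' c R θ)) ht'
  have key := intervalIntegral.hasDerivAt_integral_of_dominated_loc_of_deriv_le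
    (μ := MeasureTheory.volume) (a := 0) (b := 2 * π) (x₀ := s)
    (F := fun (t : ℝ) θ => f (circleMap c R θ) * exp (t * w (circleMap c R θ)))
    (ball_mem_nhds s one_pos)
    (Eventually.of_forall fun t =>
      (hfc.mul (continuous_const.mul hwc).cexp).aestronglyMeasurable)
    ((hfc.mul (continuous_const.mul hwc).cexp).intervalIntegrable _ _)
    ((hfc.mul hwc).mul (continuous_const.mul hwc).cexp).aestronglyMeasurable
    (Eventually.of_forall fun θ _ t ht => hbound θ t ht)
    intervalIntegrable_const
    (Eventually.of_forall fun θ _ t _ => hasDerivAt_mul_exp_ofReal_mul _ _ t)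
  exact key.2.const_smul _

end CircleAverage

namespace ExpWeight

theorem continuousOn_eval_mul_eval_inv (q r : ℂ[X]) :
    ContinuousOn (fun z => q.eval z * r.eval z⁻¹) (sphere 0 1) := by
  have : ∀ z ∈ sphere (0 : ℂ) 1, z ≠ 0 := fun z hz => ne_zero_of_mem_unit_sphere ⟨z, hz⟩
  fun_prop (disch := assumption)

theorem continuousOn_add_inv : ContinuousOn (fun z : ℂ => z + z⁻¹) (sphere 0 1) :=
  continuousOn_id.add (continuousOn_id.inv₀ fun z hz => ne_zero_of_mem_unit_sphere ⟨z, hz⟩)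

theorem continuousOn_integrand (s : ℝ) (q r : ℂ[X]) :
    ContinuousOn (fun z => q.eval z * r.eval z⁻¹ * exp (s * (z + z⁻¹))) (sphere 0 1) :=
  (continuousOn_eval_mul_eval_inv q r).mul (continuousOn_const.mul continuousOn_add_inv).cexp

theorem circleIntegrable_integrand_div (s : ℝ) (q r : ℂ[X]) :
    CircleIntegrable (fun z => q.eval z * r.eval z⁻¹ * exp (s * (z + z⁻¹)) / z) 0 1 :=
  ((continuousOn_integrand s q r).div continuousOn_id
    fun z hz => ne_zero_of_mem_unit_sphere ⟨z, hz⟩).circleIntegrable zero_le_one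

noncomputable def pairing (s : ℝ) : ℂ[X] →ₗ[ℂ] ℂ[X] →ₗ[ℂ] ℂ :=
  LinearMap.mk₂ ℂ (fun q r => ∮ z in C(0, 1), q.eval z * r.eval z⁻¹ * exp (s * (z + z⁻¹)) / z)
    (fun q₁ q₂ r => by
      simp only [eval_add, add_mul, add_div]
      exact circleIntegral.integral_add (circleIntegrable_integrand_div s q₁ r)
        (circleIntegrable_integrand_div s q₂ r))
    (fun a q r => by
      simp only [eval_smul, smul_eq_mul, mul_assoc, mul_div_assoc]
      exact circleIntegral.integral_const_mul _ _ _ _)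
    (fun q r₁ r₂ => by
      rw [← circleIntegral.integral_add (circleIntegrable_integrand_div s q r₁)
        (circleIntegrable_integrand_div s q r₂)]
      congr 1 with z
      simp only [eval_add]
      ring)
    (fun a q r => by
      simp only [eval_smul, smul_eq_mul, mul_left_comm _ a, mul_assoc, mul_div_assoc]
      exact circleIntegral.integral_const_mul _ _ _ _)

theorem pairing_apply (s : ℝ) (q r : ℂ[X]) :
    pairing s q r = ∮ z in C(0, 1), q.eval z * r.eval z⁻¹ * exp (s * (z + z⁻¹)) / z :=
  rfl

theorem pairing_eq_circleAverage (s : ℝ) (q r : ℂ[X]) :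
    pairing s q r =
      2 * π * I * circleAverage (fun z => q.eval z * r.eval z⁻¹ * exp (s * (z + z⁻¹))) 0 1 :=
  (pairing_apply s q r).trans <| circleIntegral_div_self_eq_circleAverage
    (fun z => q.eval z * r.eval z⁻¹ * exp (s * (z + z⁻¹)))

theorem pairing_comm (s : ℝ) (q r : ℂ[X]) : pairing s q r = pairing s r q := by
  simp only [pairing_eq_circleAverage]
  rw [← circleAverage_zero_one_congr_inv]
  simp only [inv_inv, add_comm _ (_ : ℂ)⁻¹, mul_comm (eval _ q)]

theorem hasDerivAt_pairing_const (q r : ℂ[X]) (s : ℝ) :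
    HasDerivAt (fun t => pairing t q r) (pairing s (X * q) r + pairing s q (X * r)) s := by
  have hf := continuousOn_eval_mul_eval_inv q r
  have hw := continuousOn_add_inv
  rw [← abs_one] at hf hw
  have hint (q r : ℂ[X]) := (continuousOn_integrand s q r).circleIntegrable zero_le_one
  simp only [pairing_eq_circleAverage, ← mul_add]
  rw [← circleAverage_add (hint _ _) (hint _ _)]
  refine (hasDerivAt_circleAverage_mul_exp hf hw s).const_mul _ |>.congr_deriv ?_
  congr 2 with z
  simp only [eval_mul, eval_X, Pi.add_apply]
  ring

theorem pairing_sum_C_mul (s : ℝ) (A B : Finset ℕ) (a b : ℕ → ℂ) (u v : ℕ → ℂ[X]) :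
    pairing s (∑ j ∈ A, C (a j) * u j) (∑ k ∈ B, C (b k) * v k) =
      ∑ j ∈ A, ∑ k ∈ B, a j * b k * pairing s (u j) (v k) := by
  simp only [← smul_eq_C_mul, map_sum, map_smul, LinearMap.sum_apply, LinearMap.smul_apply,
    smul_eq_mul, mul_sum]
  rw [sum_comm]
  exact sum_congr rfl fun j _ => sum_congr rfl fun k _ => by ring

theorem hasDerivAt_pairing_sum {a b : ℕ → ℝ → ℂ} {S : Finset ℕ} {s : ℝ}
    (ha : ∀ j ∈ S, DifferentiableAt ℝ (a j) s) (hb : ∀ k ∈ S, DifferentiableAt ℝ (b k) s) :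
    HasDerivAt (fun t => pairing t (∑ j ∈ S, C (a j t) * X ^ j) (∑ k ∈ S, C (b k t) * X ^ k))
      (pairing s (∑ j ∈ S, C (deriv (a j) s) * X ^ j) (∑ k ∈ S, C (b k s) * X ^ k) +
        pairing s (∑ j ∈ S, C (a j s) * X ^ j) (∑ k ∈ S, C (deriv (b k) s) * X ^ k) +
        (pairing s (X * ∑ j ∈ S, C (a j s) * X ^ j) (∑ k ∈ S, C (b k s) * X ^ k) +
          pairing s (∑ j ∈ S, C (a j s) * X ^ j) (X * ∑ k ∈ S, C (b k s) * X ^ k))) s := by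
  simp only [mul_sum, mul_left_comm X, pairing_sum_C_mul, ← sum_add_distrib]
  refine HasDerivAt.fun_sum fun j hj => HasDerivAt.fun_sum fun k hk => ?_
  exact (((ha j hj).hasDerivAt.fun_mul (hb k hk).hasDerivAt).mul
    (hasDerivAt_pairing_const _ _ s)).congr_deriv (by ring)

theorem hasDerivAt_pairing_self {p : ℝ → ℂ[X]} {n : ℕ} {s : ℝ}
    (hp : ∀ᶠ t in 𝓝 s, IsMonicOfDegree (p t) n)
    (hdiff : ∀ k ≤ n, DifferentiableAt ℝ (fun t => (p t).coeff k) s)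
    (horth : ∀ q : ℂ[X], q.degree < n → pairing s q (p s) = 0) :
    HasDerivAt (fun t => pairing t (p t) (p t)) (2 * pairing s (X * p s) (p s)) s := by
  have hexpand (t : ℝ) (ht : IsMonicOfDegree (p t) n) :
      p t = ∑ j ∈ range (n + 1), C ((p t).coeff j) * X ^ j :=
    as_sum_range_C_mul_X_pow' _ (Nat.lt_succ_of_le ht.natDegree_eq.le)
  have hlead : deriv (fun t => (p t).coeff n) s = 0 := by
    have : (fun t => (p t).coeff n) =ᶠ[𝓝 s] fun _ => 1 := hp.mono fun t ht => by
      simpa [ht.natDegree_eq] using ht.monic.coeff_natDegree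
    rw [this.deriv_eq, deriv_const]
  have hlower : (∑ j ∈ range (n + 1), C (deriv (fun t => (p t).coeff j) s) * X ^ j).degree <
      (n : WithBot ℕ) := by
    rw [sum_range_succ, hlead, C_0, zero_mul, add_zero, ← mem_degreeLT]
    exact sum_mem fun k hk => mem_degreeLT.mpr <|
      (degree_C_mul_X_pow_le _ _).trans_lt (by exact_mod_cast mem_range.mp hk)
  have hdiff' : ∀ j ∈ range (n + 1), DifferentiableAt ℝ (fun t => (p t).coeff j) s :=
    fun j hj => hdiff j (Nat.lt_succ_iff.mp (mem_range.mp hj))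
  have hderiv := hasDerivAt_pairing_sum hdiff' hdiff'
  rw [← hexpand s hp.self_of_nhds, horth _ hlower, pairing_comm s (p s), horth _ hlower,
    pairing_comm s (p s) (X * p s)] at hderiv
  refine (hderiv.congr_of_eventuallyEq ?_).congr_deriv (by ring)
  filter_upwards [hp] with t ht
  rw [← hexpand t ht]

end ExpWeight

open ExpWeight

theorem stmt_15_general
    (p : ℕ → ℝ → Polynomial ℂ)
    (hmonic : ∀ n s, 0 < s → (p n s).Monic)
    (hdeg : ∀ n s, 0 < s → (p n s).natDegree = n)
    (horth : ∀ (n m : ℕ) (s : ℝ), 0 < s → n ≠ m →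
      (∮ z in C(0, 1), (p n s).eval z * (p m s).eval z⁻¹ *
        Complex.exp (s * (z + z⁻¹)) / z) = 0)
    (h : ℕ → ℝ → ℂ)
    (hh : ∀ (n : ℕ) (s : ℝ), 0 < s → h n s =
      ∮ z in C(0, 1), (p n s).eval z * (p n s).eval z⁻¹ *
        Complex.exp (s * (z + z⁻¹)) / z)
    (hne : ∀ (n : ℕ) (s : ℝ), 0 < s → h n s ≠ 0)
    (hcoeffdiff : ∀ (n k : ℕ), k ≤ n →
      DifferentiableOn ℝ (fun s => (p n s).coeff k) (Set.Ioi (0 : ℝ)))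
    (κsq : ℕ → ℝ → ℂ)
    (hκ : ∀ (n : ℕ) (s : ℝ), κsq n s = 2 * Real.pi * Complex.I / h n s)
    (Bn Cn : ℕ → ℝ → ℂ)
    (hC : ∀ (n : ℕ) (s : ℝ), 1 ≤ n → 0 < s → Cn n s = Bn n s * h n s / h (n - 1) s)
    (hrec : ∀ (n : ℕ) (s : ℝ), 1 ≤ n → 0 < s →
      Polynomial.X * (p n s + Polynomial.C (Cn n s) * p (n - 1) s) =
        p (n + 1) s + Polynomial.C (Bn n s) * p n s)
    (n : ℕ) (s : ℝ) (hn : 1 ≤ n) (hs : 0 < s)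
    (hk : κsq n s ≠ κsq (n - 1) s) :
    Cn n s = -(κsq (n - 1) s / (2 * κsq n s)) *
      (deriv (κsq n) s / (κsq n s - κsq (n - 1) s)) := by
  have hP : ∀ k, IsMonicOfDegree (p k s) k := fun k => ⟨hdeg k s hs, hmonic k s hs⟩
  have hPorth : ∀ k m, k ≠ m → pairing s (p k s) (p m s) = 0 := fun k m hkm => by
    rw [pairing_apply]; exact horth k m s hs hkm
  have hlower : ∀ q : ℂ[X], q.degree < n → pairing s q (p n s) = 0 := fun q hq =>
    ((pairing s).flip (p n s)).apply_eq_zero_of_degree_lt_s15 hP (fun k hk => hPorth k n hk.ne) hq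
  have hh_eq : h n =ᶠ[𝓝 s] fun t => pairing t (p n t) (p n t) :=
    eventually_gt_nhds hs |>.mono fun t ht => hh n t ht
  have hderiv_h : HasDerivAt (h n) (2 * ((Bn n s - Cn n s) * h n s)) s := by
    have hpair := hasDerivAt_pairing_self (p := p n)
      (eventually_gt_nhds hs |>.mono fun t ht => ⟨hdeg n t ht, hmonic n t ht⟩)
      (fun k hk => (hcoeffdiff n k hk).differentiableAt (Ioi_mem_nhds hs)) hlower
    rw [(pairing s).apply_X_mul_of_recurrence hP hPorth hn (hrec n s hn hs), smul_eq_mul,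
      ← show h n s = pairing s (p n s) (p n s) from hh n s hs] at hpair
    exact hpair.congr_of_eventuallyEq hh_eq
  have hderiv_κ :
      deriv (κsq n) s = -(2 * π * I) * (2 * ((Bn n s - Cn n s) * h n s)) / h n s ^ 2 := by
    rw [show κsq n = fun t => 2 * π * I / h n t from funext (hκ n),
      ((hasDerivAt_const s _).fun_div hderiv_h (hne n s hs)).deriv]
    ring
  have hh_ne : h (n - 1) s - h n s ≠ 0 := sub_ne_zero.mpr fun heq => hk (by rw [hκ, hκ, heq])
  have hn_ne := hne n s hs
  have hprev_ne := hne (n - 1) s hs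
  rw [hderiv_κ, hκ, hκ, hC n s hn hs]
  field_simp

/-- Lemma 6 (iii): `C_n = −(κ_{n−1}²/(2κ_n²))·(κ_n²)′/(κ_n² − κ_{n−1}²)`. -/
theorem stmt_15
    (p : ℕ → ℝ → Polynomial ℂ)
    (hmonic : ∀ n s, 0 < s → (p n s).Monic)
    (hdeg : ∀ n s, 0 < s → (p n s).natDegree = n)
    (hreal : ∀ n s, 0 < s → ∀ k, ((p n s).coeff k).im = 0)
    (hp0 : ∀ n s, 0 < s → (p n s).coeff 0 ≠ 0)
    (horth : ∀ (n m : ℕ) (s : ℝ), 0 < s → n ≠ m →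
      (∮ z in C(0, 1), (p n s).eval z * (p m s).eval z⁻¹ *
        Complex.exp (s * (z + z⁻¹)) / z) = 0)
    (h : ℕ → ℝ → ℂ)
    (hh : ∀ (n : ℕ) (s : ℝ), 0 < s → h n s =
      ∮ z in C(0, 1), (p n s).eval z * (p n s).eval z⁻¹ *
        Complex.exp (s * (z + z⁻¹)) / z)
    (hne : ∀ (n : ℕ) (s : ℝ), 0 < s → h n s ≠ 0)
    (hcoeffdiff : ∀ (n k : ℕ), k ≤ n →
      DifferentiableOn ℝ (fun s => (p n s).coeff k) (Set.Ioi (0 : ℝ)))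
    (κsq : ℕ → ℝ → ℂ)
    (hκ : ∀ (n : ℕ) (s : ℝ), κsq n s = 2 * Real.pi * Complex.I / h n s)
    (Bn Cn : ℕ → ℝ → ℂ)
    (hB : ∀ (n : ℕ) (s : ℝ), 0 < s → Bn n s = -((p (n + 1) s).coeff 0 / (p n s).coeff 0))
    (hC : ∀ (n : ℕ) (s : ℝ), 1 ≤ n → 0 < s → Cn n s = Bn n s * h n s / h (n - 1) s)
    (hrec : ∀ (n : ℕ) (s : ℝ), 1 ≤ n → 0 < s →
      Polynomial.X * (p n s + Polynomial.C (Cn n s) * p (n - 1) s) =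
        p (n + 1) s + Polynomial.C (Bn n s) * p n s)
    (n : ℕ) (s : ℝ) (hn : 1 ≤ n) (hs : 0 < s)
    (hk : κsq n s ≠ κsq (n - 1) s) :
    Cn n s = -(κsq (n - 1) s / (2 * κsq n s)) *
      (deriv (κsq n) s / (κsq n s - κsq (n - 1) s)) :=
  stmt_15_general p hmonic hdeg horth h hh hne hcoeffdiff κsq hκ Bn Cn hC hrec n s hn hs hk
end
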